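/- arXiv:2603.25362 — 2 statements merged into one kernel-verified Lean document; each statement's English description precedes it below -/
import Mathlib

section
/- Let π = a + b·i ∈ ℤ[i] with 0 < a < b, gcd(a,b) = 1, and p = a² + b² a prime with p ≡ 1 (mod 4), and let 𝔽 = ℤ[i]/(π). Let H = {1, −1, i̅, −i̅} ⊆ 𝔽 be the image of the units of ℤ[i], and let T ⊆ 𝔽∖{0} be a complete set of coset representatives for H in 𝔽^×, i.e., the sets tH for t ∈ T are pairwise disjoint and their union is 𝔽∖{0}. Then for every nonzero λ ∈ 𝔽, 4·Σ_{t∈T} wt_π(λ·t) = Σ_{x∈𝔽∖{0}} wt_π(x); in particular, Σ_{t∈T} wt_π(λ·t) is independent of the nonzero λ. -/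
open scoped Classical

noncomputable section

/-- The quotient ring `ℤ[i]/(π)`. -/
abbrev GQuot (pi : GaussianInt) : Type := GaussianInt ⧸ Ideal.span {pi}

/-- The quotient map `ℤ[i] → ℤ[i]/(π)`. -/
def gmk (pi : GaussianInt) : GaussianInt →+* GQuot pi := Ideal.Quotient.mk (Ideal.span {pi})

/-- Mannheim weight of an element of `ℤ[i]/(π)`:
the minimum of `|x| + |y|` over representatives `x + y·i`. -/
def mWt (pi : GaussianInt) (α : GQuot pi) : ℕ :=
  sInf { w : ℕ | ∃ z : GaussianInt, gmk pi z = α ∧ z.re.natAbs + z.im.natAbs = w }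

/-- Mannheim weight of a vector: the sum of the Mannheim weights of its coordinates. -/
def mWtVec (pi : GaussianInt) {n : ℕ} (v : Fin n → GQuot pi) : ℕ := ∑ i, mWt pi (v i)

-- basic lemmas
lemma gmk_eq_iff (pi z w : GaussianInt) : gmk pi z = gmk pi w ↔ pi ∣ z - w := by
  rw [gmk, Ideal.Quotient.eq, Ideal.mem_span_singleton]

lemma pi_norm (a b : ℕ) (pi : GaussianInt) (hpi : pi = (⟨(a : ℤ), (b : ℤ)⟩ : GaussianInt)) :
    pi.norm = ((a ^ 2 + b ^ 2 : ℕ) : ℤ) := by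
  subst hpi; simp [Zsqrtd.norm]; push_cast; ring

lemma pi_irred (a b : ℕ) (hp : Nat.Prime (a ^ 2 + b ^ 2)) (pi : GaussianInt)
    (hpi : pi = (⟨(a : ℤ), (b : ℤ)⟩ : GaussianInt)) : Irreducible pi := by
  have hn : pi.norm.natAbs = a ^ 2 + b ^ 2 := by
    rw [pi_norm a b pi hpi, Int.natAbs_natCast]
  constructor
  · rw [← Zsqrtd.norm_eq_one_iff, hn]
    exact fun h => hp.one_lt.ne' h
  · intro x y hxy
    have hmul : a ^ 2 + b ^ 2 = x.norm.natAbs * y.norm.natAbs := by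
      rw [← hn, hxy, Zsqrtd.norm_mul, Int.natAbs_mul]
    rcases hp.eq_one_or_self_of_dvd x.norm.natAbs ⟨_, hmul⟩ with h | h
    · exact Or.inl (Zsqrtd.norm_eq_one_iff.mp h)
    · right
      apply Zsqrtd.norm_eq_one_iff.mp
      rw [h] at hmul
      have := Nat.eq_of_mul_eq_mul_left hp.pos (by rw [mul_one]; exact hmul.symm :
        (a ^ 2 + b ^ 2) * y.norm.natAbs = (a ^ 2 + b ^ 2) * 1)
      exact this

def IsGU (u : GaussianInt) : Prop :=
  u = 1 ∨ u = -1 ∨ u = (⟨0, 1⟩ : GaussianInt) ∨ u = (⟨0, -1⟩ : GaussianInt)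

lemma gu_wt {u : GaussianInt} (hu : IsGU u) (z : GaussianInt) :
    (z * u).re.natAbs + (z * u).im.natAbs = z.re.natAbs + z.im.natAbs := by
  rcases hu with h | h | h | h <;> subst h <;>
    simp [Zsqrtd.re_mul, Zsqrtd.im_mul, Int.natAbs_neg, add_comm]

lemma gu_inv {u : GaussianInt} (hu : IsGU u) : ∃ v : GaussianInt, IsGU v ∧ u * v = 1 := by
  rcases hu with h | h | h | h <;> subst h
  · exact ⟨1, Or.inl rfl, one_mul 1⟩
  · exact ⟨-1, Or.inr (Or.inl rfl), by ring⟩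
  · refine ⟨⟨0, -1⟩, Or.inr (Or.inr (Or.inr rfl)), ?_⟩
    ext <;> simp [Zsqrtd.re_mul, Zsqrtd.im_mul]
  · refine ⟨⟨0, 1⟩, Or.inr (Or.inr (Or.inl rfl)), ?_⟩
    ext <;> simp [Zsqrtd.re_mul, Zsqrtd.im_mul]

lemma mWt_gu (pi : GaussianInt) {u : GaussianInt} (hu : IsGU u) (α : GQuot pi) :
    mWt pi (gmk pi u * α) = mWt pi α := by
  obtain ⟨v, hv, huv⟩ := gu_inv hu
  unfold mWt
  congr 1
  ext w
  constructor
  · rintro ⟨z, hz, rfl⟩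
    refine ⟨z * v, ?_, (gu_wt hv z).symm ▸ rfl⟩
    rw [map_mul, hz, mul_comm (gmk pi u) α, mul_assoc, ← map_mul, huv, map_one, mul_one]
  · rintro ⟨z, hz, rfl⟩
    refine ⟨z * u, ?_, (gu_wt hu z).symm ▸ rfl⟩
    rw [map_mul, hz, mul_comm]

lemma gu_diff {u v : GaussianInt} (hu : IsGU u) (hv : IsGU v) (huv : u ≠ v) :
    ((u - v).norm).natAbs ∣ 4 := by
  rcases hu with h | h | h | h <;> rcases hv with h' | h' | h' | h' <;> subst h <;> subst h' <;>
    first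
      | exact absurd rfl huv
      | decide

lemma gmk_gu_ne (a b : ℕ) (hp : Nat.Prime (a ^ 2 + b ^ 2)) (hmod : (a ^ 2 + b ^ 2) % 4 = 1)
    (pi : GaussianInt) (hpi : pi = (⟨(a : ℤ), (b : ℤ)⟩ : GaussianInt))
    {u v : GaussianInt} (hu : IsGU u) (hv : IsGU v) (huv : u ≠ v) :
    gmk pi u ≠ gmk pi v := by
  intro h
  rw [gmk_eq_iff] at h
  have h2 : pi.norm ∣ (u - v).norm := by
    obtain ⟨c, hc⟩ := h
    exact ⟨c.norm, by rw [hc, Zsqrtd.norm_mul]⟩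
  have h3 : (a ^ 2 + b ^ 2) ∣ (u - v).norm.natAbs := by
    have := Int.natAbs_dvd_natAbs.mpr h2
    rwa [pi_norm a b pi hpi, Int.natAbs_natCast] at this
  have h4 : (a ^ 2 + b ^ 2) ∣ 4 := h3.trans (gu_diff hu hv huv)
  have h5 := Nat.le_of_dvd (by norm_num) h4
  have h6 := hp.one_lt
  omega

lemma quot_finite (a b : ℕ) (hp : Nat.Prime (a ^ 2 + b ^ 2)) (pi : GaussianInt)
    (hpi : pi = (⟨(a : ℤ), (b : ℤ)⟩ : GaussianInt)) : Finite (GQuot pi) := by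
  set p := a ^ 2 + b ^ 2 with hP
  haveI : NeZero p := ⟨hp.pos.ne'⟩
  apply Finite.of_surjective
    (fun c : ZMod p × ZMod p => gmk pi (⟨(c.1.val : ℤ), (c.2.val : ℤ)⟩ : GaussianInt))
  intro α
  obtain ⟨z, rfl⟩ := Ideal.Quotient.mk_surjective α
  refine ⟨((z.re : ZMod p), (z.im : ZMod p)), ?_⟩
  show gmk pi _ = gmk pi z
  rw [gmk_eq_iff]
  have hdvd : pi ∣ ((p : ℤ) : GaussianInt) := by
    refine ⟨star pi, ?_⟩
    rw [← Zsqrtd.norm_eq_mul_conj, pi_norm a b pi hpi]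
  refine hdvd.trans ?_
  rw [Zsqrtd.intCast_dvd]
  constructor
  · show (p : ℤ) ∣ (((z.re : ZMod p).val : ℤ) - z.re)
    rw [← ZMod.intCast_zmod_eq_zero_iff_dvd]
    push_cast
    simp [ZMod.natCast_val, ZMod.intCast_cast, ZMod.cast_id]
  · show (p : ℤ) ∣ (((z.im : ZMod p).val : ℤ) - z.im)
    rw [← ZMod.intCast_zmod_eq_zero_iff_dvd]
    push_cast
    simp [ZMod.natCast_val, ZMod.intCast_cast, ZMod.cast_id]

lemma key (a b : ℕ) (hp : Nat.Prime (a ^ 2 + b ^ 2)) (hmod : (a ^ 2 + b ^ 2) % 4 = 1)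
    (pi : GaussianInt) (hpi : pi = (⟨(a : ℤ), (b : ℤ)⟩ : GaussianInt))
    (H : Set (GQuot pi))
    (hH : H = {1, -1, gmk pi (⟨0, 1⟩ : GaussianInt), -(gmk pi (⟨0, 1⟩ : GaussianInt))})
    (T : Set (GQuot pi)) (hT0 : ∀ t ∈ T, t ≠ 0)
    (hcover : (⋃ t ∈ T, (fun h => t * h) '' H) = {x : GQuot pi | x ≠ 0})
    (hdisj : ∀ t₁ ∈ T, ∀ t₂ ∈ T, t₁ ≠ t₂ →
      Disjoint ((fun h => t₁ * h) '' H) ((fun h => t₂ * h) '' H)) :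
    4 * (∑ᶠ t ∈ T, mWt pi t) = ∑ᶠ x ∈ {x : GQuot pi | x ≠ 0}, mWt pi x := by
  haveI := quot_finite a b hp pi hpi
  have hpr : Prime pi := (pi_irred a b hp pi hpi).prime
  haveI : (Ideal.span {pi}).IsPrime := (Ideal.span_singleton_prime hpr.ne_zero).mpr hpr
  haveI : IsDomain (GQuot pi) := Ideal.Quotient.isDomain _
  -- weights are invariant under multiplication by elements of H
  have hwt : ∀ h ∈ H, ∀ t : GQuot pi, mWt pi (t * h) = mWt pi t := by
    intro h hh t
    have hex : ∃ u : GaussianInt, IsGU u ∧ h = gmk pi u := by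
      rw [hH] at hh
      simp only [Set.mem_insert_iff, Set.mem_singleton_iff] at hh
      rcases hh with rfl | rfl | rfl | rfl
      · exact ⟨1, Or.inl rfl, (map_one _).symm⟩
      · exact ⟨-1, Or.inr (Or.inl rfl), by rw [map_neg, map_one]⟩
      · exact ⟨⟨0, 1⟩, Or.inr (Or.inr (Or.inl rfl)), rfl⟩
      · refine ⟨⟨0, -1⟩, Or.inr (Or.inr (Or.inr rfl)), ?_⟩
        rw [show (⟨0, -1⟩ : GaussianInt) = -(⟨0, 1⟩ : GaussianInt) by ext <;> simp, map_neg]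
    obtain ⟨u, hu, rfl⟩ := hex
    rw [mul_comm, mWt_gu pi hu]
  -- distinctness of the elements of H
  have e1 : (1 : GQuot pi) = gmk pi 1 := (map_one _).symm
  have e2 : (-1 : GQuot pi) = gmk pi (-1) := by rw [map_neg, map_one]
  have e4 : -(gmk pi (⟨0, 1⟩ : GaussianInt)) = gmk pi (⟨0, -1⟩ : GaussianInt) := by
    rw [show (⟨0, -1⟩ : GaussianInt) = -(⟨0, 1⟩ : GaussianInt) by ext <;> simp, map_neg]
  have hne : ∀ u v : GaussianInt, IsGU u → IsGU v → u ≠ v → gmk pi u ≠ gmk pi v :=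
    fun u v hu hv huv => gmk_gu_ne a b hp hmod pi hpi hu hv huv
  have n12 : (1 : GQuot pi) ≠ -1 := by
    have := hne 1 (-1) (Or.inl rfl) (Or.inr (Or.inl rfl)) (by decide)
    rwa [← e1, ← e2] at this
  have n13 : (1 : GQuot pi) ≠ gmk pi ⟨0, 1⟩ := by
    have := hne 1 ⟨0, 1⟩ (Or.inl rfl) (Or.inr (Or.inr (Or.inl rfl))) (by decide)
    rwa [← e1] at this
  have n14 : (1 : GQuot pi) ≠ -(gmk pi ⟨0, 1⟩) := by
    have := hne 1 ⟨0, -1⟩ (Or.inl rfl) (Or.inr (Or.inr (Or.inr rfl))) (by decide)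
    rwa [← e1, ← e4] at this
  have n23 : (-1 : GQuot pi) ≠ gmk pi ⟨0, 1⟩ := by
    have := hne (-1) ⟨0, 1⟩ (Or.inr (Or.inl rfl)) (Or.inr (Or.inr (Or.inl rfl))) (by decide)
    rwa [← e2] at this
  have n24 : (-1 : GQuot pi) ≠ -(gmk pi ⟨0, 1⟩) := by
    have := hne (-1) ⟨0, -1⟩ (Or.inr (Or.inl rfl)) (Or.inr (Or.inr (Or.inr rfl))) (by decide)
    rwa [← e2, ← e4] at this
  have n34 : gmk pi (⟨0, 1⟩ : GaussianInt) ≠ -(gmk pi ⟨0, 1⟩) := by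
    have := hne ⟨0, 1⟩ ⟨0, -1⟩ (Or.inr (Or.inr (Or.inl rfl))) (Or.inr (Or.inr (Or.inr rfl)))
      (by decide)
    rwa [← e4] at this
  -- the sum over a coset
  have hcard : ∀ t : GQuot pi, ∑ᶠ h ∈ H, mWt pi (t * h) = 4 * mWt pi t := by
    intro t
    rw [finsum_mem_congr rfl (fun h hh => hwt h hh t),
      finsum_mem_eq_finite_toFinset_sum _ (Set.toFinite H), Finset.sum_const, smul_eq_mul]
    congr 1
    have hHf : (Set.toFinite H).toFinset =
        ({1, -1, gmk pi ⟨0, 1⟩, -(gmk pi ⟨0, 1⟩)} : Finset (GQuot pi)) := by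
      ext x; simp [hH]
    rw [hHf]
    rw [Finset.card_insert_of_notMem (by simp [n12, n13, n14]),
      Finset.card_insert_of_notMem (by simp [n23, n24]),
      Finset.card_insert_of_notMem (by simp [n34]), Finset.card_singleton]
  have hstep : ∑ᶠ x ∈ ⋃ t ∈ T, (fun h => t * h) '' H, mWt pi x
      = ∑ᶠ t ∈ T, ∑ᶠ x ∈ (fun h => t * h) '' H, mWt pi x :=
    finsum_mem_biUnion (fun t₁ h₁ t₂ h₂ hnee => hdisj t₁ h₁ t₂ h₂ hnee) (Set.toFinite T)
      (fun t _ => Set.toFinite _)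
  have h2 : ∑ᶠ t ∈ T, ∑ᶠ x ∈ (fun h => t * h) '' H, mWt pi x
      = ∑ᶠ t ∈ T, 4 * mWt pi t := by
    refine finsum_mem_congr rfl (fun t ht => ?_)
    rw [finsum_mem_image (fun h₁ _ h₂ _ e => mul_left_cancel₀ (hT0 t ht) e)]
    exact hcard t
  have h3 : ∑ᶠ t ∈ T, 4 * mWt pi t = 4 * ∑ᶠ t ∈ T, mWt pi t := by
    rw [finsum_mem_eq_finite_toFinset_sum _ (Set.toFinite T),
      finsum_mem_eq_finite_toFinset_sum _ (Set.toFinite T), Finset.mul_sum]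
  rw [← hcover, hstep, h2, h3]

/-- if `H = {1, -1, i, -i} ⊆ 𝔽 = ℤ[i]/(π)` (image of the units) and `T` is a
complete set of coset representatives for `H` in `𝔽^×`, then for every nonzero `λ ∈ 𝔽`,
`4·Σ_{t∈T} wt_π(λt) = Σ_{x ≠ 0} wt_π(x)`; in particular the left sum is independent of `λ`. -/
theorem stmt6 (a b : ℕ) (ha : 0 < a) (hab : a < b) (hgcd : Nat.gcd a b = 1)
    (hp : Nat.Prime (a ^ 2 + b ^ 2)) (hmod : (a ^ 2 + b ^ 2) % 4 = 1)
    (pi : GaussianInt) (hpi : pi = (⟨(a : ℤ), (b : ℤ)⟩ : GaussianInt))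
    (H : Set (GQuot pi))
    (hH : H = {1, -1, gmk pi (⟨0, 1⟩ : GaussianInt), -(gmk pi (⟨0, 1⟩ : GaussianInt))})
    (T : Set (GQuot pi)) (hT0 : ∀ t ∈ T, t ≠ 0)
    (hcover : (⋃ t ∈ T, (fun h => t * h) '' H) = {x : GQuot pi | x ≠ 0})
    (hdisj : ∀ t₁ ∈ T, ∀ t₂ ∈ T, t₁ ≠ t₂ →
      Disjoint ((fun h => t₁ * h) '' H) ((fun h => t₂ * h) '' H)) :
    ∀ l : GQuot pi, l ≠ 0 →
      4 * (∑ᶠ t ∈ T, mWt pi (l * t)) = ∑ᶠ x ∈ {x : GQuot pi | x ≠ 0}, mWt pi x := by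
  intro l hl
  haveI := quot_finite a b hp pi hpi
  have hpr : Prime pi := (pi_irred a b hp pi hpi).prime
  haveI : (Ideal.span {pi}).IsPrime := (Ideal.span_singleton_prime hpr.ne_zero).mpr hpr
  haveI : IsDomain (GQuot pi) := Ideal.Quotient.isDomain _
  have hlinj : Function.Injective (fun x : GQuot pi => l * x) :=
    fun x y e => mul_left_cancel₀ hl e
  set T' : Set (GQuot pi) := (fun t => l * t) '' T with hT'
  have hT0' : ∀ t ∈ T', t ≠ 0 := by
    rintro _ ⟨t, ht, rfl⟩
    exact mul_ne_zero hl (hT0 t ht)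
  have hcover' : (⋃ t ∈ T', (fun h => t * h) '' H) = {x : GQuot pi | x ≠ 0} := by
    rw [hT', Set.biUnion_image]
    have himg : ∀ t : GQuot pi, (fun h => l * t * h) '' H
        = (fun x => l * x) '' ((fun h => t * h) '' H) := by
      intro t
      rw [Set.image_image]
      simp [mul_assoc]
    calc ⋃ t ∈ T, (fun h => l * t * h) '' H
        = ⋃ t ∈ T, (fun x => l * x) '' ((fun h => t * h) '' H) := by
          exact Set.iUnion₂_congr (fun t _ => himg t)
      _ = (fun x => l * x) '' (⋃ t ∈ T, (fun h => t * h) '' H) := by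
          rw [Set.image_iUnion₂]
      _ = (fun x => l * x) '' {x : GQuot pi | x ≠ 0} := by rw [hcover]
      _ = {x : GQuot pi | x ≠ 0} := by
          ext x
          constructor
          · rintro ⟨y, hy, rfl⟩
            exact mul_ne_zero hl hy
          · intro hx
            obtain ⟨y, hy⟩ := (Finite.injective_iff_surjective.mp hlinj) x
            refine ⟨y, ?_, hy⟩
            intro h0
            rw [h0] at hy
            simp at hy
            exact hx hy.symm
  have hdisj' : ∀ t₁ ∈ T', ∀ t₂ ∈ T', t₁ ≠ t₂ →
      Disjoint ((fun h => t₁ * h) '' H) ((fun h => t₂ * h) '' H) := by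
    rintro _ ⟨t₁, h₁, rfl⟩ _ ⟨t₂, h₂, rfl⟩ hne12
    have ht12 : t₁ ≠ t₂ := fun e => hne12 (by rw [e])
    have hd := hdisj t₁ h₁ t₂ h₂ ht12
    have himg : ∀ t : GQuot pi, (fun h => l * t * h) '' H
        = (fun x => l * x) '' ((fun h => t * h) '' H) := by
      intro t
      rw [Set.image_image]
      simp [mul_assoc]
    rw [himg t₁, himg t₂]
    exact (Set.disjoint_image_iff hlinj).mpr hd
  have hkey := key a b hp hmod pi hpi H hH T' hT0' hcover' hdisj'
  rw [hT', finsum_mem_image (fun x _ y _ e => hlinj e)] at hkey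
  exact hkey
end
end

section
/- Let π = a + b·i ∈ ℤ[i] with 0 < a < b, gcd(a,b) = 1, and p = a² + b² a prime with p ≡ 1 (mod 4), and let 𝔽 = ℤ[i]/(π). Then for every integer n ≥ 2: if n > (p−1)/4 then d_π(n, n−1) = 2; if n = (p−1)/4 then d_π(n, n−1) = 3; and if n < (p−1)/4 then d_π(n, n−1) ≥ 3. -/
open scoped Classical

noncomputable section

/-- Hamming weight of a vector: the number of nonzero coordinates. -/
def hWtVec {n : ℕ} {F : Type*} [Zero F] (v : Fin n → F) : ℕ :=
  Set.ncard { i : Fin n | v i ≠ 0 }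

/-- Minimum Mannheim distance of a linear code (minimum Mannheim weight of a
nonzero codeword). -/
def dPiCode (pi : GaussianInt) {n : ℕ} (C : Submodule (GQuot pi) (Fin n → GQuot pi)) : ℕ :=
  sInf { w : ℕ | ∃ c ∈ C, c ≠ 0 ∧ mWtVec pi c = w }

/-- Minimum Hamming distance of a linear code. -/
def dHCode (pi : GaussianInt) {n : ℕ} (C : Submodule (GQuot pi) (Fin n → GQuot pi)) : ℕ :=
  sInf { w : ℕ | ∃ c ∈ C, c ≠ 0 ∧ hWtVec c = w }

/-- `dPiMax pi n k`: the maximum minimum Mannheim distance over all `[n,k]` codes. -/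
def dPiMax (pi : GaussianInt) (n k : ℕ) : ℕ :=
  sSup { d : ℕ | ∃ C : Submodule (GQuot pi) (Fin n → GQuot pi),
    Module.finrank (GQuot pi) C = k ∧ dPiCode pi C = d }

/-- `dHMax pi n k`: the maximum minimum Hamming distance over all `[n,k]` codes. -/
def dHMax (pi : GaussianInt) (n k : ℕ) : ℕ :=
  sSup { d : ℕ | ∃ C : Submodule (GQuot pi) (Fin n → GQuot pi),
    Module.finrank (GQuot pi) C = k ∧ dHCode pi C = d }

/-!
The elements of Mannheim weight one in `𝔽 = ℤ[i]/(π)` are the images of the Gaussian units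
`±1, ±i`; they form the subgroup `⟨i⟩` of order 4 of `𝔽ˣ`, which therefore has `(p - 1)/4`
cosets. An `[n, n-1]` code is the kernel of a check vector `w`. If some `w j` vanishes the code
has a codeword of weight one; otherwise a codeword of weight two exists exactly when two entries
`w j`, `w k` lie in the same coset. So the distance is at most 2 once `n` exceeds the number of
cosets (pigeonhole), and at least 3 when the entries represent distinct cosets. When
`n = (p - 1)/4` and the entries represent every coset, `2 * w j` lies in the coset of some `w k`
with `k ≠ j` (as `2⁴ ≠ 1` for `p > 5`, `2` is not a power of `i`), which yields a codeword of
weight 3.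
-/

open Finset

theorem Zsqrtd.irreducible_of_natAbs_norm_prime {d : ℤ} {z : ℤ√d} (h : z.norm.natAbs.Prime) :
    Irreducible z := by
  refine ⟨fun hz => h.ne_one (Zsqrtd.norm_eq_one_iff.mpr hz), fun x y hxy => ?_⟩
  rw [hxy, Zsqrtd.norm_mul, Int.natAbs_mul, Nat.prime_mul_iff] at h
  simp only [← Zsqrtd.norm_eq_one_iff]
  tauto

namespace GaussianInt

theorem natAbs_re_add_natAbs_im_eq_one_iff {z : GaussianInt} :
    z.re.natAbs + z.im.natAbs = 1 ↔ IsUnit z := by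
  rw [← Zsqrtd.norm_eq_one_iff, natAbs_norm_eq]
  generalize z.re.natAbs = a, z.im.natAbs = b
  constructor <;> intro h
  · obtain ⟨rfl, rfl⟩ | ⟨rfl, rfl⟩ : (a = 0 ∧ b = 1) ∨ (a = 1 ∧ b = 0) := by omega
    all_goals rfl
  · have ha : a ≤ 1 := by nlinarith
    have hb : b ≤ 1 := by nlinarith
    interval_cases a <;> interval_cases b <;> simp_all

def unitI : GaussianIntˣ :=
  ⟨Zsqrtd.sqrtd, -Zsqrtd.sqrtd, by simp [Zsqrtd.dmuld], by simp [Zsqrtd.dmuld]⟩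

theorem unitI_sq : unitI ^ 2 = -1 := by
  ext <;> simp [unitI, sq]

theorem mem_zpowers_unitI (u : GaussianIntˣ) : u ∈ Subgroup.zpowers unitI := by
  have h := natAbs_re_add_natAbs_im_eq_one_iff.mpr u.isUnit
  obtain hu | hu | hu | hu : (u : GaussianInt) = 1 ∨ (u : GaussianInt) = -1 ∨
      (u : GaussianInt) = Zsqrtd.sqrtd ∨ (u : GaussianInt) = -Zsqrtd.sqrtd := by
    generalize (u : GaussianInt) = z at h
    obtain ⟨x, y⟩ := z
    simp only at h
    obtain ⟨rfl, rfl⟩ | ⟨rfl, rfl⟩ | ⟨rfl, rfl⟩ | ⟨rfl, rfl⟩ :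
        (x = 1 ∧ y = 0) ∨ (x = -1 ∧ y = 0) ∨ (x = 0 ∧ y = 1) ∨ (x = 0 ∧ y = -1) := by
      omega
    all_goals simp [Zsqrtd.ext_iff]
  · rw [Units.val_eq_one.mp hu]
    exact one_mem _
  · rw [show u = unitI ^ 2 from Units.ext (by rw [hu, unitI_sq]; rfl)]
    exact pow_mem (Subgroup.mem_zpowers _) 2
  · rw [show u = unitI from Units.ext hu]
    exact Subgroup.mem_zpowers _
  · rw [show u = unitI⁻¹ from Units.ext hu]
    exact inv_mem (Subgroup.mem_zpowers _)

end GaussianInt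

instance (pi : GaussianInt) [(Ideal.span {pi}).IsMaximal] : Field (GQuot pi) :=
  Ideal.Quotient.field _

theorem isMaximal_span_of_norm_eq_prime {pi : GaussianInt} {p : ℕ} (hp : p.Prime)
    (hN : pi.norm = p) : (Ideal.span {pi}).IsMaximal :=
  PrincipalIdealRing.isMaximal_of_irreducible
    (Zsqrtd.irreducible_of_natAbs_norm_prime (by rwa [hN, Int.natAbs_natCast]))

theorem nonempty_ringEquiv_zmod {pi : GaussianInt} [(Ideal.span {pi}).IsMaximal] {p : ℕ}
    [Fact p.Prime] (hp : p % 4 ≠ 3) (hN : pi.norm = p) : Nonempty (GQuot pi ≃+* ZMod p) := by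
  obtain ⟨y, hy⟩ := ZMod.exists_sq_eq_neg_one_iff.mpr hp
  obtain ⟨c, hc, hcpi⟩ : ∃ c : ZMod p, c * c = -1 ∧ (pi.re : ZMod p) + pi.im * c = 0 := by
    have hnorm : ((pi.norm : ℤ) : ZMod p) = 0 := by simp [hN]
    rw [Zsqrtd.norm_def] at hnorm
    push_cast at hnorm
    -- `(re π + y im π)(re π - y im π) = N π = p`
    rcases mul_eq_zero.mp (show ((pi.re : ZMod p) + pi.im * y) * (pi.re - pi.im * y) = 0 by
      linear_combination hnorm + (pi.im : ZMod p) ^ 2 * hy) with h | h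
    · exact ⟨y, hy.symm, h⟩
    · exact ⟨-y, by linear_combination hy.symm, by linear_combination h⟩
  let f : GaussianInt →+* ZMod p := Zsqrtd.lift ⟨c, by push_cast; exact hc⟩
  let fbar : GQuot pi →+* ZMod p := Ideal.Quotient.lift _ f fun z hz => by
    obtain ⟨t, rfl⟩ := Ideal.mem_span_singleton'.mp hz
    rw [map_mul, show f pi = 0 from hcpi, mul_zero]
  have hsurj : Function.Surjective fbar := fun x => by
    obtain ⟨m, rfl⟩ := ZMod.intCast_surjective x
    exact ⟨gmk pi m, by simp [fbar, gmk]⟩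
  exact ⟨RingEquiv.ofBijective fbar ⟨fbar.injective, hsurj⟩⟩

section MannheimWeight

variable {pi : GaussianInt}

theorem gmk_surjective (pi : GaussianInt) : Function.Surjective (gmk pi) :=
  Ideal.Quotient.mk_surjective

theorem mWt_le_of_gmk_eq {z : GaussianInt} {α : GQuot pi} (h : gmk pi z = α) :
    mWt pi α ≤ z.re.natAbs + z.im.natAbs :=
  Nat.sInf_le ⟨z, h, rfl⟩

theorem exists_gmk_eq_mWt (α : GQuot pi) :
    ∃ z : GaussianInt, gmk pi z = α ∧ z.re.natAbs + z.im.natAbs = mWt pi α := by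
  obtain ⟨z, rfl⟩ := gmk_surjective pi α
  have : mWt pi (gmk pi z) ∈ _ := Nat.sInf_mem ⟨_, z, rfl, rfl⟩
  exact this

@[simp]
theorem mWt_eq_zero_iff {α : GQuot pi} : mWt pi α = 0 ↔ α = 0 := by
  refine ⟨fun h => ?_, fun h => ?_⟩
  · obtain ⟨z, rfl, hz⟩ := exists_gmk_eq_mWt α
    rw [show z = 0 by ext <;> simp <;> omega, map_zero]
  · subst h
    simpa using mWt_le_of_gmk_eq (map_zero (gmk pi))

@[simp]
theorem mWt_zero : mWt pi 0 = 0 := mWt_eq_zero_iff.mpr rfl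

theorem mWt_one_le : mWt pi 1 ≤ 1 := by
  simpa using mWt_le_of_gmk_eq (map_one (gmk pi))

theorem mWt_add_le (α β : GQuot pi) : mWt pi (α + β) ≤ mWt pi α + mWt pi β := by
  obtain ⟨z, rfl, hz⟩ := exists_gmk_eq_mWt α
  obtain ⟨w, rfl, hw⟩ := exists_gmk_eq_mWt β
  have := mWt_le_of_gmk_eq (map_add (gmk pi) z w)
  have := Int.natAbs_add_le z.re w.re
  have := Int.natAbs_add_le z.im w.im
  simp only [Zsqrtd.re_add, Zsqrtd.im_add] at *
  omega

def gmkI (pi : GaussianInt) : (GQuot pi)ˣ :=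
  Units.map (gmk pi : GaussianInt →* GQuot pi) GaussianInt.unitI

theorem gmkI_sq : gmkI pi ^ 2 = -1 := by
  ext
  simp [gmkI, ← map_pow, GaussianInt.unitI_sq]

theorem neg_one_mem_zpowers_gmkI : -1 ∈ Subgroup.zpowers (gmkI pi) :=
  gmkI_sq ▸ pow_mem (Subgroup.mem_zpowers _) 2

theorem pow_four_eq_one_of_mem_zpowers_gmkI {u : (GQuot pi)ˣ}
    (hu : u ∈ Subgroup.zpowers (gmkI pi)) : u ^ 4 = 1 := by
  obtain ⟨m, rfl⟩ := hu
  rw [← zpow_natCast, ← zpow_mul, mul_comm, zpow_mul, zpow_natCast,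
    show 4 = 2 * 2 from rfl, pow_mul, gmkI_sq]
  simp

theorem orderOf_gmkI (h2 : (2 : GQuot pi) ≠ 0) : orderOf (gmkI pi) = 4 := by
  refine orderOf_eq_prime_pow (p := 2) (n := 1) (fun h => h2 ?_) ?_
  · have := congrArg Units.val h
    rw [pow_one, gmkI_sq] at this
    push_cast at this
    linear_combination -this
  · rw [show 2 ^ (1 + 1) = 2 * 2 from rfl, pow_mul, gmkI_sq]
    simp

theorem mWt_eq_one_iff [Nontrivial (GQuot pi)] {α : GQuot pi} :
    mWt pi α = 1 ↔ ∃ u ∈ Subgroup.zpowers (gmkI pi), (u : GQuot pi) = α := by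
  constructor
  · intro h
    obtain ⟨z, rfl, hz⟩ := exists_gmk_eq_mWt α
    obtain ⟨v, rfl⟩ := GaussianInt.natAbs_re_add_natAbs_im_eq_one_iff.mp (hz.trans h)
    obtain ⟨m, rfl⟩ := GaussianInt.mem_zpowers_unitI v
    exact ⟨gmkI pi ^ m, zpow_mem (Subgroup.mem_zpowers _) m, by rw [gmkI, ← map_zpow]; rfl⟩
  · rintro ⟨u, ⟨m, rfl⟩, rfl⟩
    refine le_antisymm ?_ (Nat.one_le_iff_ne_zero.mpr (mWt_eq_zero_iff.not.mpr (Units.ne_zero _)))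
    dsimp only
    rw [gmkI, ← map_zpow]
    exact (mWt_le_of_gmk_eq rfl).trans_eq
      (GaussianInt.natAbs_re_add_natAbs_im_eq_one_iff.mpr (Units.isUnit _))

end MannheimWeight

section ParityCheck

variable {K ι : Type*} [Fintype ι]

def parityCheckCode [Semiring K] (w : ι → K) : Submodule K (ι → K) :=
  LinearMap.ker (Fintype.linearCombination K w)

theorem mem_parityCheckCode [Semiring K] {w c : ι → K} :
    c ∈ parityCheckCode w ↔ ∑ i, c i * w i = 0 := by
  simp [parityCheckCode, Fintype.linearCombination_apply]

variable [Field K]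

theorem finrank_parityCheckCode {w : ι → K} (hw : w ≠ 0) :
    Module.finrank K (parityCheckCode w) = Fintype.card ι - 1 := by
  obtain ⟨j, hj⟩ := Function.ne_iff.mp hw
  have hsurj : LinearMap.range (Fintype.linearCombination K w) = ⊤ :=
    LinearMap.range_eq_top.mpr fun x => ⟨Pi.single j (x * (w j)⁻¹), by
      classical
      simp [inv_mul_cancel_right₀ hj]⟩
  have := LinearMap.finrank_range_add_finrank_ker (Fintype.linearCombination K w)
  rw [hsurj, finrank_top, Module.finrank_self, Module.finrank_fintype_fun_eq_card] at this
  rw [parityCheckCode]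
  omega

theorem finrank_parityCheckCode_units [Nonempty ι] (w : ι → Kˣ) :
    Module.finrank K (parityCheckCode fun i => (w i : K)) = Fintype.card ι - 1 :=
  finrank_parityCheckCode (Function.ne_iff.mpr ⟨Classical.arbitrary ι, (w _).ne_zero⟩)

theorem exists_eq_parityCheckCode [Nonempty ι] {C : Submodule K (ι → K)}
    (hC : Module.finrank K C = Fintype.card ι - 1) : ∃ w : ι → K, C = parityCheckCode w := by
  classical
  have hq : Module.finrank K ((ι → K) ⧸ C) = Module.finrank K K := by
    have := Submodule.finrank_quotient_add_finrank C
    rw [Module.finrank_fintype_fun_eq_card, hC] at this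
    rw [Module.finrank_self]
    have := Fintype.card_pos (α := ι)
    omega
  obtain ⟨ψ⟩ := FiniteDimensional.nonempty_linearEquiv_of_finrank_eq hq
  set φ := ψ.toLinearMap ∘ₗ C.mkQ
  refine ⟨fun j => φ (Pi.single j 1), ?_⟩
  have hφ : φ = Fintype.linearCombination K (fun j => φ (Pi.single j 1)) :=
    LinearMap.pi_ext fun i x => by
      rw [Fintype.linearCombination_apply_single, ← map_smul, ← Pi.single_smul', smul_eq_mul,
        mul_one]
  rw [parityCheckCode, ← hφ, LinearMap.ker_comp, LinearEquiv.ker, Submodule.comap_bot,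
    Submodule.ker_mkQ]

theorem one_lt_card_support_of_mem_parityCheckCode {w c : ι → K} (hw : ∀ i, w i ≠ 0)
    (hc : c ∈ parityCheckCode w) (hc0 : c ≠ 0) : 1 < #{i | c i ≠ 0} := by
  classical
  rw [mem_parityCheckCode, ← Finset.sum_filter_of_ne fun i _ h => left_ne_zero_of_mul h] at hc
  obtain ⟨j, hj⟩ := Function.ne_iff.mp hc0
  by_contra! h
  obtain ⟨k, hk⟩ :=
    Finset.card_eq_one.mp (le_antisymm h (Finset.card_pos.mpr ⟨j, by simpa⟩))
  rw [hk, Finset.sum_singleton] at hc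
  have : c k ≠ 0 := by simpa using hk.symm.subset (Finset.mem_singleton_self k)
  exact mul_ne_zero this (hw k) hc

theorem mk_eq_mk_iff_exists_mul_add_mul_eq_zero {H : Subgroup Kˣ} (hH : -1 ∈ H) {a b : Kˣ} :
    (a : Kˣ ⧸ H) = b ↔ ∃ x ∈ H, ∃ y ∈ H, (x : K) * a + y * b = 0 := by
  rw [QuotientGroup.eq]
  constructor
  · intro h
    refine ⟨a⁻¹ * b, h, -1, hH, ?_⟩
    push_cast
    field_simp
    ring
  · rintro ⟨x, hx, y, hy, h⟩
    have : a⁻¹ * b = -1 * (x * y⁻¹) := Units.ext <| by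
      push_cast
      field_simp
      linear_combination h
    rw [this]
    exact mul_mem hH (mul_mem hx (inv_mem hy))

end ParityCheck

section Codes

variable {pi : GaussianInt} {n : ℕ}

theorem mWtVec_single (j : Fin n) (x : GQuot pi) : mWtVec pi (Pi.single j x) = mWt pi x := by
  rw [mWtVec, Finset.sum_eq_single j (fun i _ hi => by rw [Pi.single_eq_of_ne hi, mWt_zero])
    (by simp), Pi.single_eq_same]

theorem mWtVec_add_le (u v : Fin n → GQuot pi) :
    mWtVec pi (u + v) ≤ mWtVec pi u + mWtVec pi v := by
  simp only [mWtVec, ← Finset.sum_add_distrib]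
  exact Finset.sum_le_sum fun i _ => mWt_add_le (u i) (v i)

theorem card_support_le_mWtVec (c : Fin n → GQuot pi) : #{i | c i ≠ 0} ≤ mWtVec pi c := by
  calc #{i | c i ≠ 0} = ∑ i with c i ≠ 0, 1 := Finset.card_eq_sum_ones _
    _ ≤ ∑ i with c i ≠ 0, mWt pi (c i) := Finset.sum_le_sum fun i hi =>
      Nat.one_le_iff_ne_zero.mpr (mWt_eq_zero_iff.not.mpr (Finset.mem_filter.mp hi).2)
    _ = mWtVec pi c := Finset.sum_filter_of_ne fun i _ h hc => h (by rw [hc, mWt_zero])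

theorem dPiCode_le {C : Submodule (GQuot pi) (Fin n → GQuot pi)} {c : Fin n → GQuot pi}
    (hc : c ∈ C) (hc0 : c ≠ 0) : dPiCode pi C ≤ mWtVec pi c :=
  Nat.sInf_le ⟨c, hc, hc0, rfl⟩

theorem le_dPiCode {C : Submodule (GQuot pi) (Fin n → GQuot pi)} {m : ℕ} (hC : C ≠ ⊥)
    (h : ∀ c ∈ C, c ≠ 0 → m ≤ mWtVec pi c) : m ≤ dPiCode pi C := by
  obtain ⟨c, hc, hc0⟩ := Submodule.exists_mem_ne_zero_of_ne_bot hC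
  exact le_csInf ⟨_, c, hc, hc0, rfl⟩ (by rintro _ ⟨c, hc, hc0, rfl⟩; exact h c hc hc0)

theorem dPiCode_parityCheckCode_le_of_mul_add_mul_eq_zero {w : Fin n → GQuot pi} {j k : Fin n}
    (hjk : j ≠ k) {x y : GQuot pi} (hx : x ≠ 0) (h : x * w j + y * w k = 0) :
    dPiCode pi (parityCheckCode w) ≤ mWt pi x + mWt pi y := by
  set c : Fin n → GQuot pi := Pi.single j x + Pi.single k y
  have hmem : c ∈ parityCheckCode w := by
    rw [parityCheckCode, LinearMap.mem_ker, map_add, Fintype.linearCombination_apply_single,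
      Fintype.linearCombination_apply_single, smul_eq_mul, smul_eq_mul, h]
  have hne : c ≠ 0 := fun h0 => hx (by simpa [c, Pi.single_eq_of_ne hjk] using congrFun h0 j)
  calc dPiCode pi _ ≤ mWtVec pi c := dPiCode_le hmem hne
    _ ≤ mWt pi x + mWt pi y := (mWtVec_add_le _ _).trans_eq (by rw [mWtVec_single, mWtVec_single])

abbrev unitCosets (pi : GaussianInt) : Type :=
  (GQuot pi)ˣ ⧸ Subgroup.zpowers (gmkI pi)

variable [(Ideal.span {pi}).IsMaximal]

theorem dPiCode_parityCheckCode_le_one {w : Fin n → GQuot pi} {j : Fin n} (hj : w j = 0) :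
    dPiCode pi (parityCheckCode w) ≤ 1 := by
  have hmem : Pi.single j 1 ∈ parityCheckCode w := by
    rw [parityCheckCode, LinearMap.mem_ker, Fintype.linearCombination_apply_single, hj, smul_zero]
  refine (dPiCode_le hmem (by simp)).trans ?_
  rw [mWtVec_single]
  exact mWt_one_le

theorem dPiCode_le_two_of_not_injective {w : Fin n → (GQuot pi)ˣ}
    (hw : ¬Function.Injective fun i => (w i : unitCosets pi)) :
    dPiCode pi (parityCheckCode fun i => (w i : GQuot pi)) ≤ 2 := by
  obtain ⟨j, k, hwjk, hjk⟩ := Function.not_injective_iff.mp hw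
  obtain ⟨x, hx, y, hy, hxy⟩ :=
    (mk_eq_mk_iff_exists_mul_add_mul_eq_zero neg_one_mem_zpowers_gmkI).mp hwjk
  calc _ ≤ mWt pi x + mWt pi y :=
        dPiCode_parityCheckCode_le_of_mul_add_mul_eq_zero hjk x.ne_zero hxy
    _ = 2 := by rw [mWt_eq_one_iff.mpr ⟨x, hx, rfl⟩, mWt_eq_one_iff.mpr ⟨y, hy, rfl⟩]

theorem le_dPiCode_parityCheckCode (hn : 2 ≤ n) {w : Fin n → (GQuot pi)ˣ} {m : ℕ}
    (h : ∀ c ∈ parityCheckCode (fun i => (w i : GQuot pi)), c ≠ 0 → m ≤ mWtVec pi c) :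
    m ≤ dPiCode pi (parityCheckCode fun i => (w i : GQuot pi)) := by
  have : NeZero n := ⟨by omega⟩
  refine le_dPiCode (fun hbot => ?_) h
  have := finrank_parityCheckCode_units w
  rw [hbot, finrank_bot, Fintype.card_fin] at this
  omega

theorem exists_ne_mk_eq_of_mWtVec_le_two {w : Fin n → (GQuot pi)ˣ} {c : Fin n → GQuot pi}
    (hc : c ∈ parityCheckCode fun i => (w i : GQuot pi)) (hc0 : c ≠ 0)
    (h2 : mWtVec pi c ≤ 2) :
    ∃ j k, j ≠ k ∧ (w j : unitCosets pi) = w k := by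
  obtain ⟨j, k, hjk, hs⟩ := Finset.card_eq_two.mp (le_antisymm
    ((card_support_le_mWtVec c).trans h2)
    (one_lt_card_support_of_mem_parityCheckCode (fun i => (w i).ne_zero) hc hc0))
  have sum_eq {M : Type} [AddCommMonoid M] (f : Fin n → M) (hf : ∀ i, c i = 0 → f i = 0) :
      ∑ i, f i = f j + f k := by
    rw [← Finset.sum_filter_of_ne (p := fun i => c i ≠ 0) fun i _ h hc => h (hf i hc), hs,
      Finset.sum_pair hjk]
  have hsupp : ∀ i ∈ ({j, k} : Finset (Fin n)), c i ≠ 0 := fun i hi => by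
    rw [← hs] at hi
    simpa using hi
  have hcj := hsupp j (by simp)
  have hck := hsupp k (by simp)
  have hwt : mWt pi (c j) + mWt pi (c k) ≤ 2 :=
    (sum_eq (fun i => mWt pi (c i)) fun i hi => by simp [hi]) ▸ h2
  have hj0 := mWt_eq_zero_iff.not.mpr hcj
  have hk0 := mWt_eq_zero_iff.not.mpr hck
  obtain ⟨u, hu, hcu⟩ := mWt_eq_one_iff.mp (show mWt pi (c j) = 1 by omega)
  obtain ⟨v, hv, hcv⟩ := mWt_eq_one_iff.mp (show mWt pi (c k) = 1 by omega)
  refine ⟨j, k, hjk, (mk_eq_mk_iff_exists_mul_add_mul_eq_zero neg_one_mem_zpowers_gmkI).mpr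
    ⟨u, hu, v, hv, ?_⟩⟩
  rw [mem_parityCheckCode, sum_eq _ fun i hi => by simp [hi]] at hc
  rwa [hcu, hcv]

theorem three_le_dPiCode_of_injective (hn : 2 ≤ n) {w : Fin n → (GQuot pi)ˣ}
    (hw : Function.Injective fun i => (w i : unitCosets pi)) :
    3 ≤ dPiCode pi (parityCheckCode fun i => (w i : GQuot pi)) := by
  refine le_dPiCode_parityCheckCode hn fun c hc hc0 => ?_
  by_contra! hlt
  obtain ⟨j, k, hjk, hwjk⟩ := exists_ne_mk_eq_of_mWtVec_le_two hc hc0 (by omega)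
  exact hjk (hw hwjk)

end Codes

theorem dPiMax_eq {pi : GaussianInt} {n k d : ℕ}
    (hex : ∃ C : Submodule (GQuot pi) (Fin n → GQuot pi),
      Module.finrank (GQuot pi) C = k ∧ dPiCode pi C = d)
    (hle : ∀ C : Submodule (GQuot pi) (Fin n → GQuot pi),
      Module.finrank (GQuot pi) C = k → dPiCode pi C ≤ d) :
    dPiMax pi n k = d :=
  IsGreatest.csSup_eq ⟨hex, by rintro _ ⟨C, hC, rfl⟩; exact hle C hC⟩

theorem dPiCode_le_dPiMax {pi : GaussianInt} [Finite (GQuot pi)] {n k : ℕ}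
    {C : Submodule (GQuot pi) (Fin n → GQuot pi)} (hC : Module.finrank (GQuot pi) C = k) :
    dPiCode pi C ≤ dPiMax pi n k :=
  le_csSup ((Set.finite_range (dPiCode pi)).subset
    (by rintro _ ⟨C, -, rfl⟩; exact ⟨C, rfl⟩)).bddAbove ⟨C, hC, rfl⟩

section Counting

variable {pi : GaussianInt} [(Ideal.span {pi}).IsMaximal] {n : ℕ}

theorem dPiCode_le_one_or_exists_units [NeZero n] {C : Submodule (GQuot pi) (Fin n → GQuot pi)}
    (hC : Module.finrank (GQuot pi) C = n - 1) :
    dPiCode pi C ≤ 1 ∨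
      ∃ w : Fin n → (GQuot pi)ˣ, C = parityCheckCode fun i => (w i : GQuot pi) := by
  obtain ⟨w, rfl⟩ := exists_eq_parityCheckCode (by rwa [Fintype.card_fin])
  by_cases hw : ∀ i, w i ≠ 0
  · exact Or.inr ⟨fun i => Units.mk0 (w i) (hw i), rfl⟩
  · obtain ⟨j, hj⟩ : ∃ j, w j = 0 := by simpa using hw
    exact Or.inl (dPiCode_parityCheckCode_le_one hj)

theorem dPiCode_le_two_of_card_lt [Finite (GQuot pi)] (hn : Nat.card (unitCosets pi) < n)
    {C : Submodule (GQuot pi) (Fin n → GQuot pi)} (hC : Module.finrank (GQuot pi) C = n - 1) :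
    dPiCode pi C ≤ 2 := by
  have : NeZero n := ⟨by omega⟩
  obtain h | ⟨w, rfl⟩ := dPiCode_le_one_or_exists_units hC
  · omega
  · refine dPiCode_le_two_of_not_injective fun hw => ?_
    have := Nat.card_le_card_of_injective (β := unitCosets pi) _ hw
    rw [Nat.card_eq_fintype_card, Fintype.card_fin] at this
    omega

theorem dPiCode_le_three_of_surjective [NeZero n] (h2 : mWt pi 2 = 2) {w : Fin n → (GQuot pi)ˣ}
    (hw : Function.Surjective fun i => (w i : unitCosets pi)) :
    dPiCode pi (parityCheckCode fun i => (w i : GQuot pi)) ≤ 3 := by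
  have h20 : (2 : GQuot pi) ≠ 0 := fun h => by simp [h] at h2
  obtain ⟨k, hk⟩ := hw (Units.mk0 2 h20 * w 0)
  obtain ⟨x, hx, y, hy, hxy⟩ :=
    (mk_eq_mk_iff_exists_mul_add_mul_eq_zero neg_one_mem_zpowers_gmkI).mp hk
  have hk0 : k ≠ 0 := by
    rintro rfl
    have h2mem : Units.mk0 2 h20 ∈ Subgroup.zpowers (gmkI pi) := by
      simpa using QuotientGroup.eq.mp hk
    have := mWt_eq_one_iff.mpr ⟨_, h2mem, rfl⟩
    simp_all
  calc _ ≤ mWt pi x + mWt pi (y * 2) :=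
        dPiCode_parityCheckCode_le_of_mul_add_mul_eq_zero hk0 x.ne_zero (by
          simp only [Units.val_mul, Units.val_mk0] at hxy
          linear_combination hxy)
    _ ≤ mWt pi x + (mWt pi y + mWt pi y) := by
        rw [mul_two]
        exact Nat.add_le_add_left (mWt_add_le (y : GQuot pi) y) _
    _ = 3 := by rw [mWt_eq_one_iff.mpr ⟨x, hx, rfl⟩, mWt_eq_one_iff.mpr ⟨y, hy, rfl⟩]

theorem dPiCode_le_three_of_card_eq [Finite (GQuot pi)] (hn : Nat.card (unitCosets pi) = n)
    (h2 : mWt pi 2 = 2) {C : Submodule (GQuot pi) (Fin n → GQuot pi)}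
    (hC : Module.finrank (GQuot pi) C = n - 1) : dPiCode pi C ≤ 3 := by
  have : NeZero n := ⟨hn ▸ Nat.card_pos.ne'⟩
  obtain h | ⟨w, rfl⟩ := dPiCode_le_one_or_exists_units hC
  · omega
  by_cases hw : Function.Injective fun i => (w i : unitCosets pi)
  · exact dPiCode_le_three_of_surjective h2 (hw.bijective_of_nat_card_le (by simp [hn])).2
  · exact (dPiCode_le_two_of_not_injective hw).trans (by norm_num)

theorem exists_three_le_dPiCode_of_le_card [Finite (GQuot pi)] (hn : 2 ≤ n)
    (hle : n ≤ Nat.card (unitCosets pi)) :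
    ∃ C : Submodule (GQuot pi) (Fin n → GQuot pi),
      Module.finrank (GQuot pi) C = n - 1 ∧ 3 ≤ dPiCode pi C := by
  have : NeZero n := ⟨by omega⟩
  let e : Fin n ↪ unitCosets pi :=
    (Fin.castLEEmb hle).trans (Finite.equivFin _).symm.toEmbedding
  refine ⟨_, by rw [finrank_parityCheckCode_units, Fintype.card_fin],
    three_le_dPiCode_of_injective hn (w := fun i => (e i).out) ?_⟩
  simpa using e.injective

theorem exists_dPiCode_eq_two (hn : 2 ≤ n) :
    ∃ C : Submodule (GQuot pi) (Fin n → GQuot pi),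
      Module.finrank (GQuot pi) C = n - 1 ∧ dPiCode pi C = 2 := by
  have : NeZero n := ⟨by omega⟩
  let w : Fin n → (GQuot pi)ˣ := fun _ => 1
  refine ⟨parityCheckCode fun i => (w i : GQuot pi),
    by rw [finrank_parityCheckCode_units, Fintype.card_fin],
    le_antisymm (dPiCode_le_two_of_not_injective fun h => ?_)
      (le_dPiCode_parityCheckCode hn fun c hc hc0 => ?_)⟩
  · exact absurd (@h ⟨0, by omega⟩ ⟨1, by omega⟩ rfl) (by simp [Fin.ext_iff])
  · exact (one_lt_card_support_of_mem_parityCheckCode (fun i => (w i).ne_zero) hc hc0).trans_le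
      (card_support_le_mWtVec c)

theorem card_unitCosets [Finite (GQuot pi)] (h2 : (2 : GQuot pi) ≠ 0) :
    Nat.card (unitCosets pi) = (Nat.card (GQuot pi) - 1) / 4 := by
  change Nat.card ((GQuot pi)ˣ ⧸ Subgroup.zpowers (gmkI pi)) = _
  have := Subgroup.card_eq_card_quotient_mul_card_subgroup (Subgroup.zpowers (gmkI pi))
  rw [Nat.card_units, Nat.card_zpowers, orderOf_gmkI h2] at this
  omega

theorem mWt_two_eq_two {p : ℕ} [CharP (GQuot pi) p] (hp : p.Prime) (h5 : 5 < p) :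
    mWt pi 2 = 2 := by
  have hcast (m : ℕ) (h : (m : GQuot pi) = 0) : p ∣ m := (CharP.cast_eq_zero_iff _ p m).mp h
  refine le_antisymm (by simpa using mWt_le_of_gmk_eq (map_ofNat (gmk pi) 2)) ?_
  have h0 : mWt pi 2 ≠ 0 :=
    mWt_eq_zero_iff.not.mpr (Ring.two_ne_zero (by rw [ringChar.eq (GQuot pi) p]; omega))
  have h1 : mWt pi 2 ≠ 1 := fun h => by
    obtain ⟨u, hu, hu2⟩ := mWt_eq_one_iff.mp h
    have h15 : ((15 : ℕ) : GQuot pi) = 0 := by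
      have := congrArg Units.val (pow_four_eq_one_of_mem_zpowers_gmkI hu)
      push_cast [hu2] at this
      linear_combination this
    rcases hp.dvd_mul.mp (show p ∣ 3 * 5 from hcast 15 h15) with h | h <;>
      have := Nat.le_of_dvd (by norm_num) h <;> omega
  omega

end Counting

theorem stmt11_general (a b : ℕ)
    (hp : Nat.Prime (a ^ 2 + b ^ 2)) (hmod : (a ^ 2 + b ^ 2) % 4 = 1)
    (pi : GaussianInt) (hpi : pi = (⟨(a : ℤ), (b : ℤ)⟩ : GaussianInt))
    (n : ℕ) (hn : 2 ≤ n) :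
    (n > (a ^ 2 + b ^ 2 - 1) / 4 → dPiMax pi n (n - 1) = 2) ∧
    (n = (a ^ 2 + b ^ 2 - 1) / 4 → dPiMax pi n (n - 1) = 3) ∧
    (n < (a ^ 2 + b ^ 2 - 1) / 4 → 3 ≤ dPiMax pi n (n - 1)) := by
  set p := a ^ 2 + b ^ 2
  have : Fact p.Prime := ⟨hp⟩
  have hN : pi.norm = p := by
    rw [hpi, Zsqrtd.norm_def]
    push_cast [p]
    ring
  have := isMaximal_span_of_norm_eq_prime hp hN
  obtain ⟨e⟩ := nonempty_ringEquiv_zmod (by omega) hN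
  have : Finite (GQuot pi) := Finite.of_equiv _ e.symm.toEquiv
  have : CharP (GQuot pi) p := charP_of_injective_ringHom (f := e.symm.toRingHom) e.symm.injective p
  have hcosets : Nat.card (unitCosets pi) = (p - 1) / 4 := by
    rw [card_unitCosets (Ring.two_ne_zero (by rw [ringChar.eq (GQuot pi) p]; omega)),
      Nat.card_congr e.toEquiv, Nat.card_zmod]
  refine ⟨fun hgt => ?_, fun heq => ?_, fun hlt => ?_⟩
  · exact dPiMax_eq (exists_dPiCode_eq_two hn) fun C hC => dPiCode_le_two_of_card_lt (by omega) hC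
  · have h2 := mWt_two_eq_two (pi := pi) hp (by omega)
    obtain ⟨C, hC, h3⟩ := exists_three_le_dPiCode_of_le_card (pi := pi) hn (by omega)
    exact dPiMax_eq ⟨C, hC, le_antisymm (dPiCode_le_three_of_card_eq (by omega) h2 hC) h3⟩
      fun C hC => dPiCode_le_three_of_card_eq (by omega) h2 hC
  · obtain ⟨C, hC, h3⟩ := exists_three_le_dPiCode_of_le_card (pi := pi) hn (by omega)
    exact h3.trans (dPiCode_le_dPiMax hC)

/-- `d_π(n, n-1)` equals `2` if `n > (p-1)/4`, equals `3` if `n = (p-1)/4`,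
and is at least `3` if `n < (p-1)/4`. -/
theorem stmt11 (a b : ℕ) (ha : 0 < a) (hab : a < b) (hgcd : Nat.gcd a b = 1)
    (hp : Nat.Prime (a ^ 2 + b ^ 2)) (hmod : (a ^ 2 + b ^ 2) % 4 = 1)
    (pi : GaussianInt) (hpi : pi = (⟨(a : ℤ), (b : ℤ)⟩ : GaussianInt))
    (n : ℕ) (hn : 2 ≤ n) :
    (n > (a ^ 2 + b ^ 2 - 1) / 4 → dPiMax pi n (n - 1) = 2) ∧
    (n = (a ^ 2 + b ^ 2 - 1) / 4 → dPiMax pi n (n - 1) = 3) ∧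
    (n < (a ^ 2 + b ^ 2 - 1) / 4 → 3 ≤ dPiMax pi n (n - 1)) :=
  stmt11_general a b hp hmod pi hpi n hn
end
end
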